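/- arXiv:1903.07407 — 3 statements merged into one kernel-verified Lean document; each statement's English description precedes it below -/
import Mathlib

section
/- For every positive integer n, ∫₀^{ϖ/2} sl^{4n+2}(t) dt = [∏_{j=1}^{n} (4j−1)/(4j+1)] · π/(2ϖ), i.e. ∫₀^{ϖ/2} sl^{4n+2}(t) dt = (3/5)·(7/9)·(11/13)·⋯·((4n−1)/(4n+1))·π/(2ϖ); in particular (case n = 0) ∫₀^{ϖ/2} sl²(t) dt = π/(2ϖ). -/
/-!
The substitution `t = arcsin_{p,q} y` turns `∫₀^{π_{p,q}/2} sin_{p,q}^m` into the moment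
`∫₀¹ yᵐ (1 - y^q)^(-1/p) dy`, and `u = y^q` turns that into `B((m+1)/q, 1 - 1/p) / q`;
in particular `ϖ/2 = B(1/4, 1/2)/4` and `∫₀^{ϖ/2} sl^{4n+2} = B(n + 3/4, 1/2)/4`.
The recursion `B(α+1, β) = α/(α+β) B(α, β)` produces the Wallis product, and `Γ(1/2)² = π`
gives `B(1/4, 1/2) B(3/4, 1/2) = 4π`, which identifies the value `B(3/4, 1/2)/4` at `n = 0`
with `π/(2ϖ)`.
-/

open Set MeasureTheory Filter

/-- Generalized arcsine: `arcsin_{p,q}(x) = ∫₀ˣ (1 - tᵠ)^(-1/p) dt`. -/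
noncomputable def gArcsin (p q x : ℝ) : ℝ := ∫ t in (0:ℝ)..x, (1 - t ^ q) ^ (-(1 / p))

/-- Generalized pi: `π_{p,q} = 2 ∫₀¹ (1 - tᵠ)^(-1/p) dt`. -/
noncomputable def gPi (p q : ℝ) : ℝ := 2 * gArcsin p q 1

/-- `S` is the generalized sine `sin_{p,q}` (the inverse of `gArcsin p q` on `[0,1]`). -/
def IsGSin (p q : ℝ) (S : ℝ → ℝ) : Prop :=
  ∀ y ∈ Icc (0:ℝ) 1, S (gArcsin p q y) = y

/-- `C` is the generalized cosine `cos_{p,q}`, the derivative of `S = sin_{p,q}`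
on `[0, π_{p,q}/2]`. -/
def IsGCos (p q : ℝ) (S C : ℝ → ℝ) : Prop :=
  ∀ x ∈ Icc (0:ℝ) (gPi p q / 2), HasDerivWithinAt S (C x) (Icc (0:ℝ) (gPi p q / 2)) x

namespace Complex

lemma cpow_mul_one_sub_cpow_eq_ofReal {α β x : ℝ} (hx : x ∈ Ioo (0:ℝ) 1) :
    (x : ℂ) ^ ((α : ℂ) - 1) * (1 - (x : ℂ)) ^ ((β : ℂ) - 1)
      = ((x ^ (α - 1) * (1 - x) ^ (β - 1) : ℝ) : ℂ) := by
  push_cast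
  rw [ofReal_cpow hx.1.le, ofReal_cpow (sub_nonneg.2 hx.2.le)]
  push_cast
  ring_nf

lemma betaIntegral_ofReal_eq_integral (α β : ℝ) :
    betaIntegral α β
      = ∫ x in Ioo (0:ℝ) 1, ((x ^ (α - 1) * (1 - x) ^ (β - 1) : ℝ) : ℂ) := by
  rw [betaIntegral, intervalIntegral.integral_of_le zero_le_one, integral_Ioc_eq_integral_Ioo]
  exact setIntegral_congr_fun measurableSet_Ioo fun x hx ↦ cpow_mul_one_sub_cpow_eq_ofReal hx

end Complex

namespace ProbabilityTheory

variable {α β : ℝ}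

lemma integrableOn_rpow_mul_one_sub_rpow (hα : 0 < α) (hβ : 0 < β) :
    IntegrableOn (fun x : ℝ ↦ x ^ (α - 1) * (1 - x) ^ (β - 1)) (Ioo 0 1) := by
  have h := Complex.betaIntegral_convergent (u := α) (v := β) (by simpa) (by simpa)
  rw [intervalIntegrable_iff_integrableOn_Ioo_of_le zero_le_one] at h
  simpa [IntegrableOn] using (h.congr_fun (fun x hx ↦ Complex.cpow_mul_one_sub_cpow_eq_ofReal hx)
    measurableSet_Ioo).re

lemma integral_rpow_mul_one_sub_rpow (hα : 0 < α) (hβ : 0 < β) :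
    ∫ x in Ioo (0:ℝ) 1, x ^ (α - 1) * (1 - x) ^ (β - 1) = beta α β := by
  rw [beta_eq_betaIntegralReal α β hα hβ, Complex.betaIntegral_ofReal_eq_integral,
    integral_complex_ofReal]
  rfl

lemma beta_add_one_left (hα : 0 < α) (hβ : 0 < β) :
    beta (α + 1) β = α / (α + β) * beta α β := by
  have hαβ : 0 < α + β := by positivity
  rw [beta, beta, add_right_comm, Real.Gamma_add_one hα.ne', Real.Gamma_add_one hαβ.ne']
  have := Real.Gamma_pos_of_pos hαβ
  field_simp

lemma beta_mul_beta_add_one_half (hα : 0 < α) :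
    beta α (1 / 2) * beta (α + 1 / 2) (1 / 2) = Real.pi / α := by
  rw [beta, beta, add_assoc, add_halves, Real.Gamma_add_one hα.ne', Real.Gamma_one_half_eq]
  have := Real.Gamma_pos_of_pos hα
  have := Real.Gamma_pos_of_pos (show 0 < α + 1 / 2 by positivity)
  field_simp
  rw [Real.sq_sqrt Real.pi_pos.le]

lemma beta_nat_add_three_quarters_one_half (n : ℕ) :
    beta (n + 3 / 4) (1 / 2)
      = (∏ j ∈ Finset.Icc 1 n, ((4 * (j : ℝ) - 1) / (4 * (j : ℝ) + 1)))
        * beta (3 / 4) (1 / 2) := by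
  induction n with
  | zero => simp
  | succ n ih =>
    rw [Finset.prod_Icc_succ_top (Nat.le_add_left 1 n), Nat.cast_succ, add_right_comm,
      beta_add_one_left (by positivity) (by norm_num), ih]
    field_simp
    ring

end ProbabilityTheory

open ProbabilityTheory

section SubstitutionRpow

variable {E : Type*} [NormedAddCommGroup E] [NormedSpace ℝ E] {q : ℝ}

lemma image_rpow_Ioo_zero_one (hq : 0 < q) : (· ^ q) '' Ioo (0:ℝ) 1 = Ioo 0 1 := by
  simpa [Real.zero_rpow hq.ne'] using
    (Real.continuous_rpow_const hq.le).continuousOn.image_Ioo_of_strictMonoOn zero_le_one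
      ((Real.strictMonoOn_rpow_Ici_of_exponent_pos hq).mono Icc_subset_Ici_self)

lemma injOn_rpow_Ioo_zero_one (hq : 0 < q) : InjOn (· ^ q) (Ioo (0:ℝ) 1) :=
  (Real.strictMonoOn_rpow_Ici_of_exponent_pos hq).injOn.mono fun _ hy ↦ hy.1.le

lemma hasDerivWithinAt_rpow_Ioo_zero_one {y : ℝ} (hy : y ∈ Ioo (0:ℝ) 1) :
    HasDerivWithinAt (· ^ q) (q * y ^ (q - 1)) (Ioo 0 1) y :=
  (Real.hasDerivAt_rpow_const (Or.inl hy.1.ne')).hasDerivWithinAt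

lemma integral_comp_rpow_Ioo_zero_one (g : ℝ → E) (hq : 0 < q) :
    ∫ y in Ioo (0:ℝ) 1, (q * y ^ (q - 1)) • g (y ^ q) = ∫ u in Ioo (0:ℝ) 1, g u := by
  have h := integral_image_eq_integral_abs_deriv_smul measurableSet_Ioo
    (fun y hy ↦ hasDerivWithinAt_rpow_Ioo_zero_one hy) (injOn_rpow_Ioo_zero_one hq) g
  rw [image_rpow_Ioo_zero_one hq] at h
  rw [h]
  refine setIntegral_congr_fun measurableSet_Ioo fun y hy ↦ ?_
  rw [abs_of_pos (by have := Real.rpow_pos_of_pos hy.1 (q - 1); positivity)]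

lemma integrableOn_comp_rpow_Ioo_zero_one_iff (g : ℝ → E) (hq : 0 < q) :
    IntegrableOn (fun y ↦ (q * y ^ (q - 1)) • g (y ^ q)) (Ioo 0 1) ↔
      IntegrableOn g (Ioo 0 1) := by
  have h := integrableOn_image_iff_integrableOn_abs_deriv_smul measurableSet_Ioo
    (fun y hy ↦ hasDerivWithinAt_rpow_Ioo_zero_one hy) (injOn_rpow_Ioo_zero_one hq) g
  rw [image_rpow_Ioo_zero_one hq] at h
  rw [h]
  refine integrableOn_congr_fun (fun y hy ↦ ?_) measurableSet_Ioo
  rw [abs_of_pos (by have := Real.rpow_pos_of_pos hy.1 (q - 1); positivity)]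

end SubstitutionRpow

section Moments

variable {q a b : ℝ}

/-- The substitution `u = y ^ q` carries the beta integrand with parameters `((a + 1) / q, b + 1)`
to `y ^ a * (1 - y ^ q) ^ b`. -/
lemma smul_beta_integrand_comp_rpow (hq : 0 < q) {y : ℝ} (hy : y ∈ Ioo (0:ℝ) 1) :
    (q * y ^ (q - 1)) • ((y ^ q) ^ ((a + 1) / q - 1) * (1 - y ^ q) ^ (b + 1 - 1))
      = q * (y ^ a * (1 - y ^ q) ^ b) := by
  rw [smul_eq_mul, ← Real.rpow_mul hy.1.le, add_sub_cancel_right, mul_sub, mul_one,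
    mul_div_cancel₀ _ hq.ne', mul_assoc, ← mul_assoc (y ^ (q - 1)), ← Real.rpow_add hy.1]
  ring_nf

lemma integrableOn_rpow_mul_one_sub_rpow_rpow (hq : 0 < q) (ha : -1 < a) (hb : -1 < b) :
    IntegrableOn (fun y : ℝ ↦ y ^ a * (1 - y ^ q) ^ b) (Ioo 0 1) := by
  have h := (integrableOn_comp_rpow_Ioo_zero_one_iff _ hq).2
    (integrableOn_rpow_mul_one_sub_rpow (α := (a + 1) / q) (β := b + 1)
      (div_pos (by linarith) hq) (by linarith))
  rw [integrableOn_congr_fun (fun y hy ↦ smul_beta_integrand_comp_rpow hq hy) measurableSet_Ioo]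
    at h
  simpa [IntegrableOn, hq.ne'] using h.const_mul q⁻¹

lemma integral_rpow_mul_one_sub_rpow_rpow (hq : 0 < q) (ha : -1 < a) (hb : -1 < b) :
    ∫ y in Ioo (0:ℝ) 1, y ^ a * (1 - y ^ q) ^ b = q⁻¹ * beta ((a + 1) / q) (b + 1) := by
  rw [← integral_rpow_mul_one_sub_rpow (div_pos (by linarith) hq) (by linarith),
    ← integral_comp_rpow_Ioo_zero_one
      (fun u ↦ u ^ ((a + 1) / q - 1) * (1 - u) ^ (b + 1 - 1)) hq,
    setIntegral_congr_fun measurableSet_Ioo (fun y hy ↦ smul_beta_integrand_comp_rpow hq hy),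
    integral_const_mul, inv_mul_cancel_left₀ hq.ne']

end Moments

section GeneralizedSine

variable {p q : ℝ}

lemma neg_one_lt_neg_one_div (hp : 1 < p) : -1 < -(1 / p) := by
  rw [neg_lt_neg_iff, div_lt_one (by linarith)]
  exact hp

lemma one_sub_rpow_pos (hq : 0 < q) {y : ℝ} (hy : y ∈ Ico (0:ℝ) 1) : 0 < 1 - y ^ q :=
  sub_pos.2 (Real.rpow_lt_one hy.1 hy.2 hq)

lemma intervalIntegrable_one_sub_rpow_rpow (hp : 1 < p) (hq : 0 < q) {x y : ℝ}
    (hx : x ∈ Icc (0:ℝ) 1) (hy : y ∈ Icc (0:ℝ) 1) :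
    IntervalIntegrable (fun t : ℝ ↦ (1 - t ^ q) ^ (-(1 / p))) volume x y := by
  have h : IntervalIntegrable (fun t : ℝ ↦ (1 - t ^ q) ^ (-(1 / p))) volume 0 1 := by
    rw [intervalIntegrable_iff_integrableOn_Ioo_of_le zero_le_one]
    simpa using integrableOn_rpow_mul_one_sub_rpow_rpow (a := 0) hq (by norm_num)
      (neg_one_lt_neg_one_div hp)
  rw [← uIcc_of_le zero_le_one] at hx hy
  exact h.mono_set (uIcc_subset_uIcc hx hy)

lemma gArcsin_zero : gArcsin p q 0 = 0 := intervalIntegral.integral_same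

lemma gArcsin_one (hp : 1 < p) (hq : 0 < q) :
    gArcsin p q 1 = q⁻¹ * beta (1 / q) (1 - 1 / p) := by
  have h := integral_rpow_mul_one_sub_rpow_rpow (a := 0) hq (by norm_num)
    (neg_one_lt_neg_one_div hp)
  simp only [Real.rpow_zero, one_mul, zero_add, neg_add_eq_sub] at h
  rw [gArcsin, intervalIntegral.integral_of_le zero_le_one, integral_Ioc_eq_integral_Ioo, h]

lemma continuousOn_gArcsin (hp : 1 < p) (hq : 0 < q) :
    ContinuousOn (gArcsin p q) (Icc 0 1) := by
  have h := intervalIntegral.continuousOn_primitive_interval'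
    (intervalIntegrable_one_sub_rpow_rpow hp hq (left_mem_Icc.2 zero_le_one)
      (right_mem_Icc.2 zero_le_one)) left_mem_uIcc
  rwa [uIcc_of_le zero_le_one] at h

lemma strictMonoOn_gArcsin (hp : 1 < p) (hq : 0 < q) :
    StrictMonoOn (gArcsin p q) (Icc 0 1) := by
  intro x hx y hy hxy
  have h0 : (0:ℝ) ∈ Icc (0:ℝ) 1 := left_mem_Icc.2 zero_le_one
  rw [← sub_pos, gArcsin, gArcsin, intervalIntegral.integral_interval_sub_left
    (intervalIntegrable_one_sub_rpow_rpow hp hq h0 hy)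
    (intervalIntegrable_one_sub_rpow_rpow hp hq h0 hx)]
  refine intervalIntegral.intervalIntegral_pos_of_pos_on
    (intervalIntegrable_one_sub_rpow_rpow hp hq hx hy) (fun t ht ↦ ?_) hxy
  exact Real.rpow_pos_of_pos (one_sub_rpow_pos hq ⟨hx.1.trans ht.1.le, ht.2.trans_le hy.2⟩) _

lemma hasDerivAt_gArcsin (hp : 1 < p) (hq : 0 < q) {y : ℝ} (hy : y ∈ Ioo (0:ℝ) 1) :
    HasDerivAt (gArcsin p q) ((1 - y ^ q) ^ (-(1 / p))) y :=
  intervalIntegral.integral_hasDerivAt_right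
    (intervalIntegrable_one_sub_rpow_rpow hp hq (left_mem_Icc.2 zero_le_one)
      (Ioo_subset_Icc_self hy))
    (Measurable.stronglyMeasurable (by fun_prop)).stronglyMeasurableAtFilter
    ((continuousAt_const.sub (Real.continuousAt_rpow_const _ _ (Or.inl hy.1.ne'))).rpow_const
      (Or.inl (one_sub_rpow_pos hq (Ioo_subset_Ico_self hy)).ne'))

lemma image_gArcsin_Ioo (hp : 1 < p) (hq : 0 < q) :
    gArcsin p q '' Ioo 0 1 = Ioo 0 (gArcsin p q 1) := by
  rw [(continuousOn_gArcsin hp hq).image_Ioo_of_strictMonoOn zero_le_one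
    (strictMonoOn_gArcsin hp hq), gArcsin_zero]

lemma IsGSin.integral_comp {S : ℝ → ℝ} (hS : IsGSin p q S) (hp : 1 < p) (hq : 0 < q)
    (f : ℝ → ℝ) :
    ∫ t in (0:ℝ)..gArcsin p q 1, f (S t)
      = ∫ y in Ioo (0:ℝ) 1, f y * (1 - y ^ q) ^ (-(1 / p)) := by
  have hpos : 0 < gArcsin p q 1 := by
    simpa [gArcsin_zero] using strictMonoOn_gArcsin hp hq (left_mem_Icc.2 zero_le_one)
      (right_mem_Icc.2 zero_le_one) zero_lt_one
  rw [intervalIntegral.integral_of_le hpos.le, integral_Ioc_eq_integral_Ioo,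
    ← image_gArcsin_Ioo hp hq, integral_image_eq_integral_abs_deriv_smul measurableSet_Ioo
      (fun y hy ↦ (hasDerivAt_gArcsin hp hq hy).hasDerivWithinAt)
      ((strictMonoOn_gArcsin hp hq).injOn.mono Ioo_subset_Icc_self)]
  refine setIntegral_congr_fun measurableSet_Ioo fun y hy ↦ ?_
  rw [hS y (Ioo_subset_Icc_self hy), smul_eq_mul, mul_comm,
    abs_of_pos (Real.rpow_pos_of_pos (one_sub_rpow_pos hq (Ioo_subset_Ico_self hy)) _)]

lemma IsGSin.integral_pow {S : ℝ → ℝ} (hS : IsGSin p q S) (hp : 1 < p) (hq : 0 < q)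
    (m : ℕ) :
    ∫ t in (0:ℝ)..gArcsin p q 1, S t ^ m = q⁻¹ * beta ((m + 1) / q) (1 - 1 / p) := by
  have h := integral_rpow_mul_one_sub_rpow_rpow (a := m) hq
    (by linarith [m.cast_nonneg (α := ℝ)]) (neg_one_lt_neg_one_div hp)
  simp only [Real.rpow_natCast, neg_add_eq_sub] at h
  rw [hS.integral_comp hp hq (· ^ m), h]

end GeneralizedSine

/-- Wallis-type formula for the lemniscate sine: for every `n` (the empty product for
`n = 0` giving `∫₀^{ϖ/2} sl² t dt = π/(2ϖ)`),
`∫₀^{ϖ/2} sl^{4n+2} t dt = (3/5)(7/9)(11/13)⋯((4n-1)/(4n+1)) · π/(2ϖ)`. -/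
theorem stmt_15 (S : ℝ → ℝ) (hS : IsGSin 2 4 S) (n : ℕ) :
    ∫ t in (0:ℝ)..(gPi 2 4 / 2), S t ^ (4 * n + 2) =
      (∏ j ∈ Finset.Icc 1 n, ((4 * (j : ℝ) - 1) / (4 * (j : ℝ) + 1))) *
        (Real.pi / (2 * gPi 2 4)) := by
  have hπ : Real.pi = beta (1 / 4) (1 / 2) * beta (3 / 4) (1 / 2) / 4 := by
    rw [show (3 / 4 : ℝ) = 1 / 4 + 1 / 2 by norm_num, beta_mul_beta_add_one_half (by norm_num)]
    ring
  have hβ : 0 < beta (1 / 4) (1 / 2) := beta_pos (by norm_num) (by norm_num)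
  rw [gPi, mul_div_cancel_left₀ _ two_ne_zero, hS.integral_pow (by norm_num) (by norm_num),
    gArcsin_one (by norm_num) (by norm_num),
    show ((4 * n + 2 : ℕ) + 1 : ℝ) / 4 = n + 3 / 4 by push_cast; ring,
    show (1 : ℝ) - 1 / 2 = 1 / 2 by norm_num, beta_nat_add_three_quarters_one_half, hπ]
  field_simp
  ring
end

section
/- The infinite product ∏_{n=1}^{∞} (1 − 1/(2n·(4n−1)))^{−1} converges and equals ϖ/2, where ϖ is the lemniscate constant. -/
open Set MeasureTheory Filter

/-!
Substituting `u = t ^ q` turns `∫₀¹ (1 - t ^ q) ^ (-1/p) dt` into the Beta integral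
`B(1/q, 1 - 1/p) / q`, so `π_{p,q} / 2 = Γ(1 + 1/q) Γ(1 - 1/p) / Γ(1 + 1/q - 1/p)`;
for `ϖ = π_{2,4}` this is `Γ(1/2) Γ(5/4) / Γ(3/4)`. On the other side
`1 - 1/(2n(4n-1)) = (n - 1/2)(n + 1/4) / (n (n - 1/4))`, and Euler's limit formula
`N ^ s ∏_{n ≤ N} n / (n + s) → Γ(s + 1)` evaluates the partial products to the same Gamma
quotient, the powers of `N` cancelling because `-1/2 + 1/4 = 0 - 1/4`.
-/

open Real Topology

theorem Finset.prod_Icc_one_eq_prod_range {M : Type*} [CommMonoid M] (f : ℕ → M) (N : ℕ) :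
    ∏ n ∈ Finset.Icc 1 N, f n = ∏ j ∈ Finset.range N, f (j + 1) := by
  rw [← Finset.Ico_add_one_right_eq_Icc, Finset.prod_Ico_eq_prod_range]
  simp [add_comm]

-- Shifting to `GammaSeq (s + 1)` avoids dividing by `s`, and `GammaSeq 0` is junk.
theorem rpow_mul_prod_div_add_eq_GammaSeq {s : ℝ} (hs : -1 < s) {N : ℕ} (hN : N ≠ 0) :
    (N : ℝ) ^ s * ∏ n ∈ Finset.Icc 1 N, (n : ℝ) / (n + s) =
      GammaSeq (s + 1) N / (N / (N + (s + 1))) := by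
  have hN' : (0 : ℝ) < N := by positivity
  have hpos : ∀ n ∈ Finset.Icc 1 N, (0 : ℝ) < n + s := fun n hn => by
    have : (1 : ℝ) ≤ n := by exact_mod_cast (Finset.mem_Icc.mp hn).1
    linarith
  have hfact : (N.factorial : ℝ) = ∏ n ∈ Finset.Icc 1 N, (n : ℝ) := by
    rw [Finset.prod_Icc_one_eq_prod_range, ← Finset.prod_range_add_one_eq_factorial]
    push_cast; rfl
  have hden : ∏ j ∈ Finset.range (N + 1), (s + 1 + j) =
      (∏ n ∈ Finset.Icc 1 N, ((n : ℝ) + s)) * (N + (s + 1)) := by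
    rw [Finset.prod_range_succ, Finset.prod_Icc_one_eq_prod_range]
    congr 1
    · exact Finset.prod_congr rfl fun j _ => by push_cast; ring
    · ring
  have h1 : (0 : ℝ) < ∏ n ∈ Finset.Icc 1 N, ((n : ℝ) + s) := Finset.prod_pos hpos
  have h2 : (0 : ℝ) < N + (s + 1) := by linarith
  rw [GammaSeq, hden, hfact, Finset.prod_div_distrib, rpow_add_one hN'.ne']
  field_simp

theorem tendsto_rpow_mul_prod_div_add {s : ℝ} (hs : -1 < s) :
    Tendsto (fun N : ℕ => (N : ℝ) ^ s * ∏ n ∈ Finset.Icc 1 N, (n : ℝ) / (n + s)) atTop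
      (𝓝 (Gamma (s + 1))) := by
  have h := (GammaSeq_tendsto_Gamma (s + 1)).div (tendsto_natCast_div_add_atTop (s + 1))
    one_ne_zero
  rw [div_one] at h
  refine h.congr' ?_
  filter_upwards [eventually_ne_atTop 0] with N hN
  exact (rpow_mul_prod_div_add_eq_GammaSeq hs hN).symm

theorem tendsto_prod_mul_div_mul_Gamma {a b c d : ℝ} (ha : -1 < a) (hb : -1 < b) (hc : -1 < c)
    (hd : -1 < d) (habcd : a + b = c + d) :
    Tendsto (fun N : ℕ => ∏ n ∈ Finset.Icc 1 N, ((n + c) * (n + d)) / ((n + a) * (n + b)))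
      atTop (𝓝 (Gamma (a + 1) * Gamma (b + 1) / (Gamma (c + 1) * Gamma (d + 1)))) := by
  have hΓ : Gamma (c + 1) * Gamma (d + 1) ≠ 0 :=
    (mul_pos (Gamma_pos_of_pos (by linarith)) (Gamma_pos_of_pos (by linarith))).ne'
  refine (((tendsto_rpow_mul_prod_div_add ha).mul (tendsto_rpow_mul_prod_div_add hb)).div
    ((tendsto_rpow_mul_prod_div_add hc).mul (tendsto_rpow_mul_prod_div_add hd)) hΓ).congr' ?_
  filter_upwards [eventually_ne_atTop 0] with N hN
  have hN' : (0 : ℝ) < N := by positivity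
  have hpow : (N : ℝ) ^ a * (N : ℝ) ^ b = (N : ℝ) ^ c * (N : ℝ) ^ d := by
    rw [← rpow_add hN', ← rpow_add hN', habcd]
  have hne : ∀ s, -1 < s → ∀ n ∈ Finset.Icc 1 N, (n : ℝ) + s ≠ 0 := fun s hs n hn => by
    have : (1 : ℝ) ≤ n := by exact_mod_cast (Finset.mem_Icc.mp hn).1
    linarith
  rw [Pi.div_apply, mul_mul_mul_comm, hpow,
    mul_mul_mul_comm _ (∏ n ∈ Finset.Icc 1 N, (n : ℝ) / (n + c)),
    mul_div_mul_left _ _ (by positivity), ← Finset.prod_mul_distrib, ← Finset.prod_mul_distrib,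
    ← Finset.prod_div_distrib]
  refine Finset.prod_congr rfl fun n hn => ?_
  have : (n : ℝ) ≠ 0 := by simpa using hne 0 (by norm_num) n hn
  have := hne a ha n hn; have := hne b hb n hn; have := hne c hc n hn; have := hne d hd n hn
  field_simp

theorem integral_rpow_mul_one_sub_rpow {u v : ℝ} (hu : 0 < u) (hv : 0 < v) :
    ∫ x in (0 : ℝ)..1, x ^ (u - 1) * (1 - x) ^ (v - 1) = Gamma u * Gamma v / Gamma (u + v) := by
  have hB : Complex.betaIntegral u v =
      ↑(∫ x in (0 : ℝ)..1, x ^ (u - 1) * (1 - x) ^ (v - 1)) := by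
    rw [Complex.betaIntegral, ← intervalIntegral.integral_ofReal]
    refine intervalIntegral.integral_congr fun x hx => ?_
    rw [uIcc_of_le zero_le_one] at hx
    rw [Complex.ofReal_mul, Complex.ofReal_cpow hx.1, Complex.ofReal_cpow (sub_nonneg.2 hx.2)]
    push_cast; rfl
  apply Complex.ofReal_injective
  rw [← hB, Complex.betaIntegral_eq_Gamma_mul_div _ _ (by simpa) (by simpa)]
  push_cast
  rw [Complex.Gamma_ofReal, Complex.Gamma_ofReal, ← Complex.ofReal_add, Complex.Gamma_ofReal]

theorem gArcsin_one_eq_Gamma {p q : ℝ} (hp : 1 < p) (hq : 0 < q) :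
    gArcsin p q 1 = Gamma (1 + 1 / q) * Gamma (1 - 1 / p) / Gamma (1 + 1 / q - 1 / p) := by
  have himage : (· ^ q) '' Ioo (0 : ℝ) 1 = Ioo 0 1 := by
    rw [(continuous_rpow_const hq.le).continuousOn.image_Ioo_of_strictMonoOn zero_le_one
      ((strictMonoOn_rpow_Ici_of_exponent_pos hq).mono Icc_subset_Ici_self)]
    simp [zero_rpow hq.ne']
  have hsubst := integral_image_eq_integral_abs_deriv_smul (measurableSet_Ioo (a := 0) (b := 1))
    (fun t ht => (hasDerivAt_rpow_const (Or.inl (ne_of_gt ht.1))).hasDerivWithinAt)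
    ((rpow_left_injOn hq.ne').mono (Ioo_subset_Ioi_self.trans Ioi_subset_Ici_self))
    (fun y => q⁻¹ * (y ^ (1 / q - 1) * (1 - y) ^ (1 - 1 / p - 1)))
  rw [himage, integral_const_mul, ← integral_Ioc_eq_integral_Ioo,
    ← intervalIntegral.integral_of_le zero_le_one,
    integral_rpow_mul_one_sub_rpow (by positivity) (by simpa using inv_lt_one_of_one_lt₀ hp)]
    at hsubst
  calc gArcsin p q 1 = ∫ t in Ioo (0 : ℝ) 1, (1 - t ^ q) ^ (-(1 / p)) := by
        rw [gArcsin, intervalIntegral.integral_of_le zero_le_one, integral_Ioc_eq_integral_Ioo]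
    _ = ∫ t in Ioo (0 : ℝ) 1, |q * t ^ (q - 1)| •
          (q⁻¹ * ((t ^ q) ^ (1 / q - 1) * (1 - t ^ q) ^ (1 - 1 / p - 1))) := by
        refine setIntegral_congr_fun measurableSet_Ioo fun t ht => ?_
        have hpow : t ^ (q - 1) * (t ^ q) ^ (1 / q - 1) = 1 := by
          rw [← rpow_mul ht.1.le, ← rpow_add ht.1,
            show q - 1 + q * (1 / q - 1) = 0 by field_simp; ring, rpow_zero]
        rw [abs_of_pos (by have := ht.1; positivity), smul_eq_mul, sub_sub_cancel_left]
        linear_combination (-(t ^ (q - 1) * (t ^ q) ^ (1 / q - 1) * (1 - t ^ q) ^ (-(1 / p)))) *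
          mul_inv_cancel₀ hq.ne' - (1 - t ^ q) ^ (-(1 / p)) * hpow
    _ = Gamma (1 + 1 / q) * Gamma (1 - 1 / p) / Gamma (1 + 1 / q - 1 / p) := by
        rw [← hsubst, add_comm 1 (1 / q), Gamma_add_one (by positivity),
          show 1 / q + 1 - 1 / p = 1 / q + (1 - 1 / p) by ring]
        ring

/-- Corollary 3.9 (product formula for the lemniscate constant `ϖ = π_{2,4}`):
`ϖ/2 = ∏_{n≥1} (1 - 1/(2n(4n-1)))⁻¹`. -/
theorem stmt_17 :
    Tendsto
      (fun N : ℕ => ∏ n ∈ Finset.Icc 1 N,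
        (1 - 1 / (2 * (n : ℝ) * (4 * (n : ℝ) - 1)))⁻¹)
      atTop (nhds (gPi 2 4 / 2)) := by
  have hlim := tendsto_prod_mul_div_mul_Gamma (a := -(1 / 2)) (b := 1 / 4) (c := 0) (d := -(1 / 4))
    (by norm_num) (by norm_num) (by norm_num) (by norm_num) (by norm_num)
  have hϖ : gPi 2 4 / 2 =
      Gamma (-(1 / 2) + 1) * Gamma (1 / 4 + 1) / (Gamma (0 + 1) * Gamma (-(1 / 4) + 1)) := by
    rw [gPi, mul_div_cancel_left₀ _ two_ne_zero, gArcsin_one_eq_Gamma (by norm_num) (by norm_num)]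
    norm_num [Gamma_one]
    ring_nf
  rw [hϖ]
  refine hlim.congr fun N => Finset.prod_congr rfl fun n hn => ?_
  have hn1 : (1 : ℝ) ≤ n := by exact_mod_cast (Finset.mem_Icc.mp hn).1
  have hfactor : 1 - 1 / (2 * (n : ℝ) * (4 * n - 1)) =
      ((n + -(1 / 2)) * (n + 1 / 4)) / ((n + 0) * (n + -(1 / 4))) := by
    rw [one_sub_div (by nlinarith), div_eq_div_iff (by nlinarith) (by nlinarith)]
    ring
  rw [hfactor, inv_div]
end

section
/- The generalized π constants satisfy π_{4,2} = 2π/ϖ and π_{2,4/3} = 3π/ϖ, where ϖ = π_{2,4} is the lemniscate constant; that is, 2∫₀^1 (1−t²)^{−1/4} dt = 2π/ϖ and 2∫₀^1 (1−t^{4/3})^{−1/2} dt = 3π/ϖ. -/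
open Set MeasureTheory Filter

lemma real_beta {u v : ℝ} (hu : 0 < u) (hv : 0 < v) :
    Real.Gamma u * Real.Gamma v
      = Real.Gamma (u + v) * ∫ x in (0:ℝ)..1, x ^ (u - 1) * (1 - x) ^ (v - 1) := by
  have h := Complex.Gamma_mul_Gamma_eq_betaIntegral (s := (u:ℂ)) (t := (v:ℂ))
    (by simpa using hu) (by simpa using hv)
  have hB : Complex.betaIntegral u v
      = ((∫ x in (0:ℝ)..1, x ^ (u - 1) * (1 - x) ^ (v - 1) : ℝ) : ℂ) := by
    rw [Complex.betaIntegral, ← intervalIntegral.integral_ofReal]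
    refine intervalIntegral.integral_congr fun x hx => ?_
    rw [uIcc_of_le (by norm_num : (0:ℝ) ≤ 1)] at hx
    push_cast
    rw [Complex.ofReal_cpow hx.1, Complex.ofReal_cpow (by linarith [hx.2])]
    push_cast
    ring
  rw [hB, ← Complex.ofReal_add, Complex.Gamma_ofReal, Complex.Gamma_ofReal,
    Complex.Gamma_ofReal, ← Complex.ofReal_mul, ← Complex.ofReal_mul] at h
  exact_mod_cast h

lemma subst_lemma {p q : ℝ} (hp : 1 < p) (hq : 1 < q) :
    ∫ x in (0:ℝ)..1, x ^ (1/q - 1) * (1 - x) ^ (-(1/p))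
      = q * ∫ t in (0:ℝ)..1, (1 - t ^ q) ^ (-(1/p)) := by
  have hq0 : (0:ℝ) < q := by linarith
  have himg : (fun t : ℝ => t ^ q) '' Ioo 0 1 = Ioo 0 1 := by
    ext x
    constructor
    · rintro ⟨t, ht, rfl⟩
      exact ⟨Real.rpow_pos_of_pos ht.1 q, Real.rpow_lt_one ht.1.le ht.2 hq0⟩
    · intro hx
      refine ⟨x ^ (1/q), ⟨Real.rpow_pos_of_pos hx.1 _,
        Real.rpow_lt_one hx.1.le hx.2 (by positivity)⟩, ?_⟩
      show (x ^ (1/q)) ^ q = x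
      rw [← Real.rpow_mul hx.1.le, one_div, inv_mul_cancel₀ hq0.ne', Real.rpow_one]
  have hderiv : ∀ t ∈ Ioo (0:ℝ) 1,
      HasDerivWithinAt (fun t : ℝ => t ^ q) (q * t ^ (q - 1)) (Ioo 0 1) t := by
    intro t ht
    exact (Real.hasDerivAt_rpow_const (Or.inl ht.1.ne')).hasDerivWithinAt
  have hinj : InjOn (fun t : ℝ => t ^ q) (Ioo 0 1) := by
    intro a ha b hb hab
    rcases lt_trichotomy a b with h | h | h
    · exact absurd hab (ne_of_lt (Real.rpow_lt_rpow ha.1.le h hq0))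
    · exact h
    · exact absurd hab.symm (ne_of_lt (Real.rpow_lt_rpow hb.1.le h hq0))
  have cov := MeasureTheory.integral_image_eq_integral_abs_deriv_smul measurableSet_Ioo
    hderiv hinj (fun x => x ^ (1/q - 1) * (1 - x) ^ (-(1/p)))
  rw [himg] at cov
  rw [intervalIntegral.integral_of_le (by norm_num : (0:ℝ) ≤ 1),
    intervalIntegral.integral_of_le (by norm_num : (0:ℝ) ≤ 1),
    MeasureTheory.integral_Ioc_eq_integral_Ioo, MeasureTheory.integral_Ioc_eq_integral_Ioo,
    cov, ← MeasureTheory.integral_const_mul]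
  refine MeasureTheory.setIntegral_congr_fun measurableSet_Ioo fun t ht => ?_
  have ht0 : (0:ℝ) < t := ht.1
  have h1 : |q * t ^ (q-1)| = q * t ^ (q-1) := by
    rw [abs_of_nonneg]
    positivity
  have h2 : (t ^ q) ^ (1/q - 1) = t ^ (1 - q) := by
    rw [← Real.rpow_mul ht0.le]
    congr 1
    field_simp
  have h3 : t ^ (q-1) * t ^ (1-q) = 1 := by
    rw [← Real.rpow_add ht0]
    norm_num
  simp only [smul_eq_mul, h1, h2]
  linear_combination q * (1 - t ^ q) ^ (-(1/p)) * h3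

lemma gArcsin_one_eq {p q : ℝ} (hp : 1 < p) (hq : 1 < q) :
    gArcsin p q 1 = Real.Gamma (1/q) * Real.Gamma (1 - 1/p)
      / (q * Real.Gamma (1/q + (1 - 1/p))) := by
  have hu : 0 < 1/q := by positivity
  have hv : 0 < 1 - 1/p := by
    have : 1/p < 1 := by
      rw [div_lt_one (by linarith)]
      exact hp
    linarith
  have hb := real_beta hu hv
  have hsum : 0 < Real.Gamma (1/q + (1 - 1/p)) := Real.Gamma_pos_of_pos (by linarith)
  have hexp : ∀ x : ℝ, x ^ ((1 - 1/p) - 1) = x ^ (-(1/p)) := by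
    intro x
    congr 1
    ring
  simp only [hexp] at hb
  have hsub := subst_lemma hp hq
  rw [gArcsin]
  rw [show (∫ t in (0:ℝ)..1, (1 - t ^ q) ^ (-(1 / p)))
      = (1/q) * ∫ x in (0:ℝ)..1, x ^ (1/q - 1) * (1 - x) ^ (-(1/p)) by
    rw [hsub]; field_simp]
  have hI : (∫ x in (0:ℝ)..1, x ^ (1/q - 1) * (1 - x) ^ (-(1/p)))
      = Real.Gamma (1/q) * Real.Gamma (1 - 1/p) / Real.Gamma (1/q + (1 - 1/p)) := by
    rw [eq_div_iff hsum.ne', mul_comm, ← hb]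
  rw [hI]
  ring


/-- The identities `π_{4,2} = 2π/ϖ` and `π_{2,4/3} = 3π/ϖ` used in the proof of
Corollary 3.7, where `ϖ = π_{2,4}` is the lemniscate constant. -/
theorem stmt_19 :
    gPi 4 2 = 2 * Real.pi / gPi 2 4 ∧ gPi 2 (4 / 3) = 3 * Real.pi / gPi 2 4 := by
  set a := Real.Gamma (1/4) with ha
  set b := Real.Gamma (1/2) with hb
  set c := Real.Gamma (3/4) with hc
  have ha0 : 0 < a := Real.Gamma_pos_of_pos (by norm_num)
  have hb0 : 0 < b := Real.Gamma_pos_of_pos (by norm_num)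
  have hc0 : 0 < c := Real.Gamma_pos_of_pos (by norm_num)
  have h54 : Real.Gamma (5/4) = (1/4) * a := by
    rw [show (5/4 : ℝ) = 1/4 + 1 by norm_num, Real.Gamma_add_one (by norm_num)]
  have hbb : b * b = Real.pi := by
    rw [hb, Real.Gamma_one_half_eq]
    exact Real.mul_self_sqrt Real.pi_pos.le
  have e1 : gPi 2 4 = 2 * (a * b / (4 * c)) := by
    rw [gPi, gArcsin_one_eq (by norm_num) (by norm_num)]
    norm_num [ha, hb, hc]
  have e2 : gPi 4 2 = 2 * (b * c / (2 * ((1/4) * a))) := by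
    rw [gPi, gArcsin_one_eq (by norm_num) (by norm_num)]
    norm_num [hb, hc, h54]
  have e3 : gPi 2 (4/3) = 2 * (c * b / ((4/3) * ((1/4) * a))) := by
    rw [gPi, gArcsin_one_eq (by norm_num) (by norm_num)]
    norm_num [hb, hc, h54]
  constructor
  · rw [e1, e2, ← hbb]
    field_simp
  · rw [e1, e3, ← hbb]
    field_simp
    ring
end
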